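/- arXiv:0812.0904 — 2 statements merged into one kernel-verified Lean document; each statement's English description precedes it below -/
import Mathlib

section
/- (Lemma 1, SNR part.) Let g_1,…,g_N ≥ 0, a_1,…,a_{N-1} > 0, E_1 > 0, and noise powers σ_1²,…,σ_N² > 0, and for 1 ≤ n ≤ N let γ_n denote the n-hop end-to-end SNR. Then as the number of hops increases, the end-to-end SNR is nonincreasing: γ_N ≤ γ_{N-1} ≤ ⋯ ≤ γ_2 ≤ γ_1; equivalently, γ_m ≤ γ_n whenever 1 ≤ n ≤ m ≤ N. -/
/-!
Write `γ n = P n / D n` (`snrNum`, `snrDen`). Going from `n` to `n + 1` hops multiplies the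
numerator by `c = a n g (n + 1) ≥ 0` and maps the denominator to `c D n + σ² (n + 1)`, so
`γ (n + 1) = c P n / (c D n + σ² (n + 1)) ≤ P n / D n`: the fresh noise of the new hop
can only lower the SNR.
-/

open Finset

namespace MultihopAF

def snrNum (a g : ℕ → ℝ) (E1 : ℝ) (n : ℕ) : ℝ :=
  (∏ i ∈ Icc 1 (n - 1), a i) * (∏ i ∈ Icc 1 n, g i) * E1

def snrDen (a g σ2 : ℕ → ℝ) (n : ℕ) : ℝ :=
  (∑ j ∈ Icc 1 (n - 1), (∏ i ∈ Icc j (n - 1), a i * g (i + 1)) * σ2 j) + σ2 n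

theorem mul_div_mul_add_le_div {P D c σ : ℝ} (hP : 0 ≤ P) (hD : 0 < D) (hc : 0 ≤ c)
    (hσ : 0 ≤ σ) : c * P / (c * D + σ) ≤ P / D := by
  rcases hc.eq_or_lt with rfl | hc
  · simpa using div_nonneg hP hD.le
  · calc c * P / (c * D + σ) ≤ c * P / (c * D) :=
          div_le_div_of_nonneg_left (by positivity) (by positivity) (by linarith)
      _ = P / D := mul_div_mul_left P D hc.ne'

variable {a g σ2 : ℕ → ℝ} {E1 : ℝ}

theorem snrNum_succ (n : ℕ) :
    snrNum a g E1 (n + 2) = a (n + 1) * g (n + 2) * snrNum a g E1 (n + 1) := by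
  rw [snrNum, snrNum, Nat.add_sub_cancel, show n + 2 - 1 = n + 1 by omega,
    prod_Icc_succ_top (by omega : 1 ≤ n + 1) a, prod_Icc_succ_top (by omega : 1 ≤ n + 2) g]
  ring

theorem snrDen_succ (n : ℕ) :
    snrDen a g σ2 (n + 2) = a (n + 1) * g (n + 2) * snrDen a g σ2 (n + 1) + σ2 (n + 2) := by
  have hprod : ∀ j ∈ Icc 1 n, (∏ i ∈ Icc j (n + 1), a i * g (i + 1)) * σ2 j
      = a (n + 1) * g (n + 2) * ((∏ i ∈ Icc j n, a i * g (i + 1)) * σ2 j) := by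
    intro j hj
    rw [prod_Icc_succ_top (by grind)]
    ring
  rw [snrDen, snrDen, Nat.add_sub_cancel, show n + 2 - 1 = n + 1 by omega,
    sum_Icc_succ_top (by omega : 1 ≤ n + 1), sum_congr rfl hprod, ← mul_sum, Icc_self,
    prod_singleton]
  ring

variable {N : ℕ} (hg : ∀ i ∈ Icc 1 N, 0 ≤ g i) (ha : ∀ i ∈ Icc 1 (N - 1), 0 ≤ a i)
include hg ha

theorem snrNum_nonneg (hE1 : 0 ≤ E1) {n : ℕ} (hn : n ≤ N) : 0 ≤ snrNum a g E1 n := by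
  unfold snrNum
  have hA : 0 ≤ ∏ i ∈ Icc 1 (n - 1), a i := prod_nonneg fun i hi => ha i (by grind)
  have hG : 0 ≤ ∏ i ∈ Icc 1 n, g i := prod_nonneg fun i hi => hg i (by grind)
  positivity

theorem snrDen_pos (hσ : ∀ j ∈ Icc 1 N, 0 < σ2 j) {n : ℕ} (hn : n ∈ Icc 1 N) :
    0 < snrDen a g σ2 n := by
  have hterm : ∀ j ∈ Icc 1 (n - 1), 0 ≤ (∏ i ∈ Icc j (n - 1), a i * g (i + 1)) * σ2 j :=
    fun j hj => mul_nonneg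
      (prod_nonneg fun i hi => mul_nonneg (ha i (by grind)) (hg (i + 1) (by grind)))
      (hσ j (by grind)).le
  exact add_pos_of_nonneg_of_pos (sum_nonneg hterm) (hσ n hn)

theorem snr_succ_le (hE1 : 0 ≤ E1) (hσ : ∀ j ∈ Icc 1 N, 0 < σ2 j) {n : ℕ} (hn : 1 ≤ n)
    (hnN : n + 1 ≤ N) :
    snrNum a g E1 (n + 1) / snrDen a g σ2 (n + 1) ≤ snrNum a g E1 n / snrDen a g σ2 n := by
  obtain ⟨k, rfl⟩ : ∃ k, n = k + 1 := ⟨n - 1, by omega⟩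
  rw [snrNum_succ, snrDen_succ]
  exact mul_div_mul_add_le_div (snrNum_nonneg hg ha hE1 (by omega))
    (snrDen_pos hg ha hσ (by grind)) (mul_nonneg (ha _ (by grind)) (hg _ (by grind)))
    (hσ _ (by grind)).le

end MultihopAF

/-- Lemma 1, SNR part: the end-to-end SNR is nonincreasing in the
number of hops: `γ m ≤ γ n` whenever `1 ≤ n ≤ m ≤ N`. -/
theorem multihop_AF_snr_monotone
    (N : ℕ) (g a σ2 : ℕ → ℝ) (E1 : ℝ)
    (hg : ∀ i ∈ Finset.Icc 1 N, 0 ≤ g i)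
    (ha : ∀ i ∈ Finset.Icc 1 (N - 1), 0 < a i)
    (hE1 : 0 < E1)
    (hσ : ∀ j ∈ Finset.Icc 1 N, 0 < σ2 j)
    (γ : ℕ → ℝ)
    (hγ : ∀ n ∈ Finset.Icc 1 N,
      γ n = ((∏ i ∈ Finset.Icc 1 (n - 1), a i) * (∏ i ∈ Finset.Icc 1 n, g i) * E1) /
        ((∑ j ∈ Finset.Icc 1 (n - 1),
            (∏ i ∈ Finset.Icc j (n - 1), a i * g (i + 1)) * σ2 j) + σ2 n)) :
    ∀ n m, 1 ≤ n → n ≤ m → m ≤ N → γ m ≤ γ n := by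
  have hanti : AntitoneOn γ (Set.Icc 1 N) := by
    refine antitoneOn_of_add_one_le Set.ordConnected_Icc fun n _ hn hn1 => ?_
    rw [hγ n (by simpa using hn), hγ (n + 1) (by simpa using hn1)]
    exact MultihopAF.snr_succ_le hg (fun i hi => (ha i hi).le) hE1.le hσ hn.1 hn1.2
  intro n m hn hnm hmN
  exact hanti ⟨hn, by omega⟩ ⟨by omega, hmN⟩ hnm
end

section
/- (Lemma 1, outage part.) Let g_1,…,g_N be nonnegative random variables on a probability space, let a_1,…,a_{N-1} > 0, E_1 > 0, and noise powers σ_1²,…,σ_N² > 0, and for 1 ≤ n ≤ N let γ_n denote the (random) n-hop end-to-end SNR. Then for every threshold γ_Th > 0, the outage probability is nondecreasing in the number of hops: P(γ_1 < γ_Th) ≤ P(γ_2 < γ_Th) ≤ ⋯ ≤ P(γ_N < γ_Th). -/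
/-!
Writing `γ n = Sₙ / Dₙ`, one more hop multiplies both the signal `Sₙ` and the accumulated noise
`Dₙ` by the hop gain `cₙ = aₙ gₙ₊₁ ≥ 0` and then adds the fresh noise `σₙ₊₁² > 0` to the
denominator, so `γ (n + 1) = cₙ Sₙ / (cₙ Dₙ + σₙ₊₁²) ≤ Sₙ / Dₙ = γ n` pointwise. Hence the
events `{γ n < γ_Th}` increase with `n`, and so do their probabilities.
-/

open Finset MeasureTheory

lemma mul_div_mul_add_le_div {x d c s : ℝ} (hx : 0 ≤ x) (hd : 0 < d) (hc : 0 ≤ c) (hs : 0 ≤ s) :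
    x * c / (d * c + s) ≤ x / d := by
  rcases (add_nonneg (mul_nonneg hd.le hc) hs).eq_or_lt with h | h
  · rw [← h, div_zero]
    positivity
  · rw [div_le_div_iff₀ h hd]
    nlinarith [mul_nonneg hx hs]

namespace AmplifyForward

variable (a h σ : ℕ → ℝ) (E : ℝ)

def signal (n : ℕ) : ℝ :=
  (∏ i ∈ Icc 1 (n - 1), a i) * (∏ i ∈ Icc 1 n, h i) * E

def noise (n : ℕ) : ℝ :=
  (∑ j ∈ Icc 1 (n - 1), (∏ i ∈ Icc j (n - 1), a i * h (i + 1)) * σ j) + σ n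

noncomputable def snr (n : ℕ) : ℝ := signal a h E n / noise a h σ n

variable {a h σ E}

lemma signal_succ {n : ℕ} (hn : 1 ≤ n) :
    signal a h E (n + 1) = signal a h E n * (a n * h (n + 1)) := by
  obtain ⟨k, rfl⟩ := Nat.exists_eq_add_of_le' hn
  simp only [signal, Nat.add_sub_cancel]
  rw [prod_Icc_succ_top (by omega : 1 ≤ k + 1), prod_Icc_succ_top (by omega : 1 ≤ k + 1 + 1)]
  ring

lemma noise_succ {n : ℕ} (hn : 1 ≤ n) :
    noise a h σ (n + 1) = noise a h σ n * (a n * h (n + 1)) + σ (n + 1) := by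
  obtain ⟨k, rfl⟩ := Nat.exists_eq_add_of_le' hn
  have hprod : ∀ j ∈ Icc 1 k, (∏ i ∈ Icc j (k + 1), a i * h (i + 1)) * σ j
      = (∏ i ∈ Icc j k, a i * h (i + 1)) * σ j * (a (k + 1) * h (k + 1 + 1)) := by
    intro j hj
    rw [prod_Icc_succ_top (by grind)]
    ring
  simp only [noise, Nat.add_sub_cancel, sum_Icc_succ_top (by omega : 1 ≤ k + 1),
    sum_congr rfl hprod, ← sum_mul, Icc_self, prod_singleton]
  ring

lemma signal_nonneg {n : ℕ} (ha : ∀ i ∈ Icc 1 (n - 1), 0 ≤ a i) (hh : ∀ i ∈ Icc 1 n, 0 ≤ h i)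
    (hE : 0 ≤ E) : 0 ≤ signal a h E n :=
  mul_nonneg (mul_nonneg (prod_nonneg ha) (prod_nonneg hh)) hE

lemma noise_pos {n : ℕ} (ha : ∀ i ∈ Icc 1 (n - 1), 0 ≤ a i) (hh : ∀ i ∈ Icc 1 n, 0 ≤ h i)
    (hσ : ∀ j ∈ Icc 1 n, 0 < σ j) (hn : 1 ≤ n) : 0 < noise a h σ n := by
  refine add_pos_of_nonneg_of_pos (sum_nonneg fun j hj => mul_nonneg ?_ ?_) (hσ n (by simp [hn]))
  · refine prod_nonneg fun i hi => mul_nonneg (ha i ?_) (hh (i + 1) ?_) <;> grind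
  · exact (hσ j (by grind)).le

lemma snr_antitoneOn {N : ℕ} (ha : ∀ i ∈ Icc 1 (N - 1), 0 ≤ a i)
    (hh : ∀ i ∈ Icc 1 N, 0 ≤ h i) (hσ : ∀ j ∈ Icc 1 N, 0 < σ j) (hE : 0 ≤ E) :
    AntitoneOn (snr a h σ E) (Set.Icc 1 N) := by
  refine antitoneOn_of_add_one_le Set.ordConnected_Icc fun n _ ⟨hn, _⟩ ⟨_, hnN⟩ => ?_
  have ha' : ∀ i ∈ Icc 1 (n - 1), 0 ≤ a i := fun i hi => ha i (Icc_subset_Icc le_rfl (by omega) hi)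
  have hh' : ∀ i ∈ Icc 1 n, 0 ≤ h i := fun i hi => hh i (Icc_subset_Icc le_rfl (by omega) hi)
  have hσ' : ∀ j ∈ Icc 1 n, 0 < σ j := fun j hj => hσ j (Icc_subset_Icc le_rfl (by omega) hj)
  have hc : 0 ≤ a n * h (n + 1) :=
    mul_nonneg (ha n (mem_Icc.mpr ⟨hn, by omega⟩)) (hh (n + 1) (mem_Icc.mpr ⟨by omega, hnN⟩))
  rw [snr, snr, signal_succ hn, noise_succ hn]
  exact mul_div_mul_add_le_div (signal_nonneg ha' hh' hE) (noise_pos ha' hh' hσ' hn) hc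
    (hσ (n + 1) (mem_Icc.mpr ⟨by omega, hnN⟩)).le

end AmplifyForward

theorem multihop_AF_outage_monotone_general
    {Ω : Type*} [MeasurableSpace Ω] (μ : Measure Ω)
    (N : ℕ) (g : ℕ → Ω → ℝ) (a σ2 : ℕ → ℝ) (E1 γTh : ℝ)
    (hg : ∀ i ∈ Finset.Icc 1 N, ∀ ω, 0 ≤ g i ω)
    (ha : ∀ i ∈ Finset.Icc 1 (N - 1), 0 < a i)
    (hE1 : 0 < E1)
    (hσ : ∀ j ∈ Finset.Icc 1 N, 0 < σ2 j)
    (γ : ℕ → Ω → ℝ)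
    (hγ : ∀ n ∈ Finset.Icc 1 N, ∀ ω,
      γ n ω = ((∏ i ∈ Finset.Icc 1 (n - 1), a i) * (∏ i ∈ Finset.Icc 1 n, g i ω) * E1) /
        ((∑ j ∈ Finset.Icc 1 (n - 1),
            (∏ i ∈ Finset.Icc j (n - 1), a i * g (i + 1) ω) * σ2 j) + σ2 n)) :
    ∀ n m, 1 ≤ n → n ≤ m → m ≤ N →
      μ {ω | γ n ω < γTh} ≤ μ {ω | γ m ω < γTh} := by
  intro n m hn hnm hmN
  have hn' : n ∈ Set.Icc 1 N := ⟨hn, hnm.trans hmN⟩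
  have hm' : m ∈ Set.Icc 1 N := ⟨hn.trans hnm, hmN⟩
  refine measure_mono fun ω (hω : γ n ω < γTh) => ?_
  have hγ_snr : ∀ k ∈ Set.Icc 1 N, γ k ω = AmplifyForward.snr a (g · ω) σ2 E1 k :=
    fun k hk => hγ k (mem_Icc.mpr hk) ω
  have hanti := AmplifyForward.snr_antitoneOn (fun i hi => (ha i hi).le)
    (fun i hi => hg i hi ω) hσ hE1.le
  show γ m ω < γTh
  rw [hγ_snr m hm']
  rw [hγ_snr n hn'] at hω
  exact (hanti hn' hm' hnm).trans_lt hω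

/-- Lemma 1, outage part: the outage probability is nondecreasing in
the number of hops: `P(γ n < γ_Th) ≤ P(γ m < γ_Th)` whenever `1 ≤ n ≤ m ≤ N`. -/
theorem multihop_AF_outage_monotone
    {Ω : Type*} [MeasurableSpace Ω] (μ : Measure Ω) [IsProbabilityMeasure μ]
    (N : ℕ) (g : ℕ → Ω → ℝ) (a σ2 : ℕ → ℝ) (E1 γTh : ℝ)
    (hmeas : ∀ i ∈ Finset.Icc 1 N, Measurable (g i))
    (hg : ∀ i ∈ Finset.Icc 1 N, ∀ ω, 0 ≤ g i ω)
    (ha : ∀ i ∈ Finset.Icc 1 (N - 1), 0 < a i)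
    (hE1 : 0 < E1)
    (hσ : ∀ j ∈ Finset.Icc 1 N, 0 < σ2 j)
    (hγTh : 0 < γTh)
    (γ : ℕ → Ω → ℝ)
    (hγ : ∀ n ∈ Finset.Icc 1 N, ∀ ω,
      γ n ω = ((∏ i ∈ Finset.Icc 1 (n - 1), a i) * (∏ i ∈ Finset.Icc 1 n, g i ω) * E1) /
        ((∑ j ∈ Finset.Icc 1 (n - 1),
            (∏ i ∈ Finset.Icc j (n - 1), a i * g (i + 1) ω) * σ2 j) + σ2 n)) :
    ∀ n m, 1 ≤ n → n ≤ m → m ≤ N →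
      μ {ω | γ n ω < γTh} ≤ μ {ω | γ m ω < γTh} :=
  multihop_AF_outage_monotone_general μ N g a σ2 E1 γTh hg ha hE1 hσ γ hγ
end
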